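/- arXiv:2106.07621 — 2 statements merged into one kernel-verified Lean document; each statement's English description precedes it below -/
import Mathlib

section
/- Let f be a polynomial with rational coefficients of degree d. Then for every nonzero rational x and every rational n, writing g(t) = f(x·t), one has x·S_g(n/x) = S_f(n) + ∑_{r=1}^{d+1} (F*_r(x)/r!) · (Δ^{r-1} f(n) − Δ^{r-1} f(0)), where Δ = Δ_1 is the unit-step forward difference operator. -/
/-- The power series `D*(z) = ∑_{r≥0} d*_r z^r` over `ℚ[x]` with
`d*_r = (∏_{j=1}^{r} (x - j))/(r+1)!`, i.e. the power series of `((1+z)^x - 1)/(xz)`. -/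
noncomputable def DstarSer : PowerSeries (Polynomial ℚ) :=
  PowerSeries.mk fun r =>
    Polynomial.C ((1 : ℚ) / (Nat.factorial (r + 1))) *
      ∏ j ∈ Finset.range r, (Polynomial.X - Polynomial.C ((j : ℚ) + 1))

/-- The exponential generating function `∑_{r≥0} (F_r/r!) z^r` of a sequence of polynomials. -/
noncomputable def egf (F : ℕ → Polynomial ℚ) : PowerSeries (Polynomial ℚ) :=
  PowerSeries.mk fun r => Polynomial.C ((1 : ℚ) / (Nat.factorial r)) * F r

/-- The forward difference operator with step size `x`: `Δ_x f(t) = f(t+x) - f(t)`. -/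
noncomputable def fdiff (x : ℚ) (p : Polynomial ℚ) : Polynomial ℚ :=
  p.comp (Polynomial.X + Polynomial.C x) - p

/-!
Write `Δ` for `Δ_1`. Gregory–Newton interpolation `p(t + x) = ∑ₖ binom(x, k) Δᵏp(t)` holds for
every rational shift `x`, since both sides are polynomials in `x` that agree on `ℕ`. As
`binom(x, m + 1) = x d*_m(x)`, this says `Δ_x = x D*(Δ) Δ` on polynomials, where `D*(Δ)` only
needs to be truncated beyond the order at which `Δ` kills its argument. For
`R = S_f + ∑_{r ≥ 1} F*_r(x)/r! Δ^{r-1} f` one has `Δ R = G*(Δ) f`, hence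
`Δ_x R = x (D* G*)(Δ) f = x f`. The rescaled sum `t ↦ x S_g(t/x)` has the same `Δ_x`, so it
differs from `R` by an `x`-periodic polynomial, i.e. a constant, which is read off at `0`.
-/

open Polynomial Finset

section OperatorCalculus

variable {R M : Type*} [CommRing R] [AddCommGroup M] [Module R M] (D : Module.End R M)

theorem X_pow_dvd_sub_of_trunc_eq {N : ℕ} {P Q : R[X]}
    (h : PowerSeries.trunc N (P : PowerSeries R) = PowerSeries.trunc N (Q : PowerSeries R)) :
    X ^ N ∣ P - Q := by
  refine X_pow_dvd_iff.mpr fun d hd => ?_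
  have := congr_arg (coeff · d) h
  simpa [PowerSeries.coeff_trunc, hd, sub_eq_zero] using this

theorem pow_apply_aeval (P : R[X]) (N : ℕ) (q : M) :
    (D ^ N) (aeval D P q) = aeval D P ((D ^ N) q) := by
  rw [← Module.End.mul_apply, ← Module.End.mul_apply, ← aeval_X_pow (R := R), ← map_mul,
    ← map_mul, mul_comm]

theorem aeval_apply_eq_of_X_pow_dvd {N : ℕ} {q : M} (hq : (D ^ N) q = 0) {P Q : R[X]}
    (hPQ : X ^ N ∣ P - Q) : aeval D P q = aeval D Q q := by
  obtain ⟨T, hT⟩ := hPQ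
  rw [sub_eq_iff_eq_add'.mp hT, map_add, mul_comm, map_mul, aeval_X_pow, LinearMap.add_apply,
    Module.End.mul_apply, hq, map_zero, add_zero]

theorem aeval_trunc_apply (A : PowerSeries R) (N : ℕ) (q : M) :
    aeval D (PowerSeries.trunc N A) q = ∑ m ∈ range N, PowerSeries.coeff m A • (D ^ m) q := by
  simp [PowerSeries.trunc_apply, aeval_monomial, LinearMap.sum_apply]

theorem aeval_trunc_mul_apply {N : ℕ} {q : M} (hq : (D ^ N) q = 0) (A B : PowerSeries R) :
    aeval D (PowerSeries.trunc N (A * B)) q =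
      aeval D (PowerSeries.trunc N A) (aeval D (PowerSeries.trunc N B) q) := by
  rw [← Module.End.mul_apply, ← map_mul]
  refine aeval_apply_eq_of_X_pow_dvd D hq (X_pow_dvd_sub_of_trunc_eq ?_)
  rw [PowerSeries.trunc_trunc, Polynomial.coe_mul, PowerSeries.trunc_trunc_mul_trunc]

end OperatorCalculus

noncomputable def fdiffₗ (h : ℚ) : Module.End ℚ ℚ[X] := taylor h - 1

theorem fdiffₗ_apply (h : ℚ) (p : ℚ[X]) : fdiffₗ h p = fdiff h p := rfl

theorem fdiffₗ_pow_apply (h : ℚ) (k : ℕ) (p : ℚ[X]) : (fdiffₗ h ^ k) p = (fdiff h)^[k] p := by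
  rw [Module.End.pow_apply]
  rfl

theorem eval_fdiffₗ_pow (h : ℚ) (k : ℕ) (p : ℚ[X]) :
    ((fdiffₗ h ^ k) p).eval = (fwdDiff h)^[k] p.eval := by
  induction k with
  | zero => rfl
  | succ k ih =>
    ext t
    rw [pow_succ', Module.End.mul_apply, Function.iterate_succ_apply', ← ih, fdiffₗ_apply]
    simp [fdiff, fwdDiff, eval_comp]

theorem fdiffₗ_pow_eq_zero_of_natDegree_lt {N : ℕ} {p : ℚ[X]} (hp : p.natDegree < N) :
    (fdiffₗ 1 ^ N) p = 0 :=
  Polynomial.funext fun t => by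
    rw [congr_fun (eval_fdiffₗ_pow 1 N p) t, fwdDiff_iter_eq_zero_of_degree_lt hp, eval_zero,
      Pi.zero_apply]

theorem fdiffₗ_pow_eq_zero_of_le {h : ℚ} {N k : ℕ} {p : ℚ[X]} (hp : (fdiffₗ h ^ N) p = 0)
    (hNk : N ≤ k) : (fdiffₗ h ^ k) p = 0 := by
  rw [← Nat.sub_add_cancel hNk, pow_add, Module.End.mul_apply, hp, map_zero]

theorem eval_eq_eval_zero_of_fdiff_eq_zero {h : ℚ} (hh : h ≠ 0) {q : ℚ[X]} (hq : fdiff h q = 0)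
    (t : ℚ) : q.eval t = q.eval 0 := by
  have hperiodic : Function.Periodic q.eval h := fun s => by
    simpa [fdiff, eval_comp, sub_eq_zero] using congr_arg (eval s) hq
  suffices q = C (q.eval 0) by rw [this, eval_C, eval_C]
  refine eq_of_infinite_eval_eq _ _ <| Set.infinite_of_injective_forall_mem
    (f := fun k : ℕ => k * h) (fun a b hab => Nat.cast_injective (mul_right_cancel₀ hh hab))
    fun k => ?_
  simpa using hperiodic.nat_mul_eq k

theorem fdiff_comp_C_inv_mul_X {x : ℚ} (hx : x ≠ 0) (p : ℚ[X]) :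
    fdiff x (p.comp (C x⁻¹ * X)) = (fdiff 1 p).comp (C x⁻¹ * X) :=
  Polynomial.funext fun t => by simp [fdiff, eval_comp, mul_add, hx]

section UnitForwardDifference

local notation "Δ" => fdiffₗ 1

theorem eval_add_natCast_eq_sum_choose_mul {N : ℕ} {p : ℚ[X]} (hp : (Δ ^ N) p = 0) (t : ℚ)
    (m : ℕ) :
    p.eval (t + m) = ∑ k ∈ range N, (m.choose k : ℚ) * ((Δ ^ k) p).eval t := by
  have hnewton := shift_eq_sum_fwdDiff_iter 1 (fun s => p.eval s) m t
  simp only [nsmul_eq_mul, mul_one, ← congr_fun (eval_fdiffₗ_pow 1 _ p)] at hnewton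
  rw [hnewton, sum_subset (range_subset_range.mpr (Nat.le_add_right (m + 1) N)),
    sum_subset (range_subset_range.mpr (Nat.le_add_left N (m + 1)))]
  · intro k _ hk
    rw [fdiffₗ_pow_eq_zero_of_le hp (by simpa using hk), eval_zero, mul_zero]
  · intro k _ hk
    rw [Nat.choose_eq_zero_of_lt (by simpa [Nat.lt_succ_iff] using hk), Nat.cast_zero, zero_mul]

theorem eval_add_eq_sum_descPochhammer_mul {N : ℕ} {p : ℚ[X]} (hp : (Δ ^ N) p = 0) (t x : ℚ) :
    p.eval (t + x) = ∑ k ∈ range N,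
      (descPochhammer ℚ k).eval x / k.factorial * ((Δ ^ k) p).eval t := by
  let newton : ℚ[X] := ∑ k ∈ range N, C (((Δ ^ k) p).eval t / k.factorial) * descPochhammer ℚ k
  have hpoly : p.comp (C t + X) = newton := by
    refine eq_of_infinite_eval_eq _ _ <| Set.infinite_of_injective_forall_mem
      (f := fun m : ℕ => (m : ℚ)) Nat.cast_injective fun m => ?_
    simp only [Set.mem_ofPred_eq, eval_comp, eval_add, eval_C, eval_X,
      eval_add_natCast_eq_sum_choose_mul hp, newton, eval_finsetSum, eval_mul,
      Nat.cast_choose_eq_descPochhammer_div]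
    exact sum_congr rfl fun k _ => by ring
  have := congr_arg (eval x) hpoly
  simp only [eval_comp, eval_add, eval_C, eval_X, newton, eval_finsetSum, eval_mul] at this
  rw [this]
  exact sum_congr rfl fun k _ => by ring

theorem mul_eval_coeff_DstarSer (x : ℚ) (m : ℕ) :
    x * (PowerSeries.coeff m DstarSer).eval x =
      (descPochhammer ℚ (m + 1)).eval x / (m + 1).factorial := by
  simp only [DstarSer, PowerSeries.coeff_mk, eval_mul, eval_C, eval_prod, eval_sub, eval_X,
    descPochhammer_eval_eq_prod_range, prod_range_succ' _ m, Nat.cast_add, Nat.cast_one]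
  ring

theorem fdiffₗ_eq_smul_aeval_DstarSer (x : ℚ) {N : ℕ} {p : ℚ[X]} (hp : (Δ ^ (N + 1)) p = 0) :
    fdiffₗ x p =
      x • aeval Δ (PowerSeries.trunc N (PowerSeries.map (evalRingHom x) DstarSer)) (Δ p) := by
  refine Polynomial.funext fun t => ?_
  rw [fdiffₗ_apply, fdiff, eval_sub, eval_comp, eval_add, eval_X, eval_C,
    eval_add_eq_sum_descPochhammer_mul hp, sum_range_succ', aeval_trunc_apply, eval_smul,
    eval_finsetSum, smul_eq_mul, mul_sum]
  simp only [descPochhammer_zero, eval_one, Nat.factorial_zero, Nat.cast_one, div_one, pow_zero,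
    Module.End.one_apply, one_mul, add_sub_cancel_right, PowerSeries.coeff_map, coe_evalRingHom,
    eval_smul, smul_eq_mul, ← Module.End.mul_apply, ← pow_succ]
  refine sum_congr rfl fun m _ => ?_
  rw [← mul_assoc, mul_eval_coeff_DstarSer]

variable {Fstar : ℕ → ℚ[X]}

theorem map_DstarSer_mul_map_egf (hFstar : egf Fstar * DstarSer = 1) (x : ℚ) :
    PowerSeries.map (evalRingHom x) DstarSer * PowerSeries.map (evalRingHom x) (egf Fstar) = 1 := by
  rw [← map_mul, mul_comm, hFstar, map_one]

theorem Fstar_zero (hFstar : egf Fstar * DstarSer = 1) : Fstar 0 = 1 := by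
  simpa [PowerSeries.coeff_mul, DstarSer, egf] using congr_arg (PowerSeries.coeff 0) hFstar

theorem fdiffₗ_add_sum_Fstar (hFstar : egf Fstar * DstarSer = 1) (x : ℚ) {N : ℕ} {f S : ℚ[X]}
    (hf : (Δ ^ N) f = 0) (hS : Δ S = f) :
    fdiffₗ x (S + ∑ r ∈ Icc 1 N, C ((Fstar r).eval x / r.factorial) * (Δ ^ (r - 1)) f) =
      C x * f := by
  set R := S + ∑ r ∈ Icc 1 N, C ((Fstar r).eval x / r.factorial) * (Δ ^ (r - 1)) f
  have hΔR : Δ R = aeval Δ (PowerSeries.trunc (N + 1)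
      (PowerSeries.map (evalRingHom x) (egf Fstar))) f := by
    rw [aeval_trunc_apply, sum_range_succ', map_add, hS, map_sum, ← Ico_add_one_right_eq_Icc,
      sum_Ico_eq_sum_range, Nat.add_sub_cancel, add_comm]
    simp only [PowerSeries.coeff_map, egf, PowerSeries.coeff_mk, coe_evalRingHom,
      Fstar_zero hFstar, ← smul_eq_C_mul, map_smul, ← Module.End.mul_apply, ← pow_succ']
    congr 1
    · refine sum_congr rfl fun k _ => ?_
      rw [add_comm 1 k, Nat.add_sub_cancel, eval_smul, smul_eq_mul, one_div, inv_mul_eq_div]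
    · simp
  have hf' : (Δ ^ (N + 1)) f = 0 := fdiffₗ_pow_eq_zero_of_le hf N.le_succ
  have hR : (Δ ^ (N + 1 + 1)) R = 0 := by
    rw [pow_succ, Module.End.mul_apply, hΔR, pow_apply_aeval, hf', map_zero]
  rw [fdiffₗ_eq_smul_aeval_DstarSer x hR, hΔR, ← aeval_trunc_mul_apply _ hf',
    map_DstarSer_mul_map_egf hFstar, PowerSeries.trunc_one, map_one, Module.End.one_apply,
    smul_eq_C_mul]

end UnitForwardDifference

/-- **Corollary 2.2**: for a polynomial `f` of degree `d`,
`x ∑_{k=0}^{n/x-1} f(kx) = ∑_{k=0}^{n-1} f(k)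
  + ∑_{r=1}^{d+1} (F*_r(x)/r!) (Δ^{r-1} f(n) - Δ^{r-1} f(0))`,
where `S` is the fractional sum of `f`, `Sg` is the fractional sum of `g(t) = f(x·t)`,
`Δ = Δ_1`, and `F*_r` is the unique sequence of polynomials with
`(∑ (F*_r/r!) z^r) · D*(z) = 1`. -/
theorem generalized_summation_formula_star
    (Fstar : ℕ → Polynomial ℚ) (hFstar : egf Fstar * DstarSer = 1)
    (f : Polynomial ℚ) (d : ℕ) (hd : f.natDegree = d)
    (x : ℚ) (hx : x ≠ 0) (n : ℚ)
    (S : Polynomial ℚ) (hS0 : S.eval 0 = 0)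
    (hS : S.comp (Polynomial.X + 1) - S = f)
    (Sg : Polynomial ℚ) (hSg0 : Sg.eval 0 = 0)
    (hSg : Sg.comp (Polynomial.X + 1) - Sg = f.comp (Polynomial.C x * Polynomial.X)) :
    x * Sg.eval (n / x) = S.eval n +
      ∑ r ∈ Finset.Icc 1 (d + 1),
        (Fstar r).eval x / (Nat.factorial r : ℚ) *
          (((fdiff 1)^[r - 1] f).eval n - ((fdiff 1)^[r - 1] f).eval 0) := by
  set T := Sg.comp (C x⁻¹ * X)
  set R := S + ∑ r ∈ Icc 1 (d + 1), C ((Fstar r).eval x / r.factorial) * (fdiffₗ 1 ^ (r - 1)) f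
  have hT : fdiffₗ x T = f := by
    rw [fdiffₗ_apply, fdiff_comp_C_inv_mul_X hx, fdiff, map_one, hSg, comp_assoc, mul_comp,
      C_comp, X_comp, ← mul_assoc, ← C_mul, mul_inv_cancel₀ hx, C_1, one_mul, comp_X]
  have hR : fdiffₗ x R = C x * f :=
    fdiffₗ_add_sum_Fstar hFstar x (fdiffₗ_pow_eq_zero_of_natDegree_lt (hd ▸ d.lt_succ_self))
      (by rwa [fdiffₗ_apply, fdiff, map_one])
  have hconst := eval_eq_eval_zero_of_fdiff_eq_zero hx (q := C x * T - R) (by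
    rw [← fdiffₗ_apply, map_sub, ← smul_eq_C_mul, map_smul, hT, hR, smul_eq_C_mul, sub_self]) n
  simp only [T, R, eval_sub, eval_mul, eval_C, eval_comp, eval_add, eval_finsetSum, eval_X,
    fdiffₗ_pow_apply, hS0, hSg0, mul_zero] at hconst
  rw [div_eq_inv_mul]
  simp only [mul_sub, sum_sub_distrib]
  linarith
end

section
/- For every integer r ≥ 2, the polynomial F*_r is even: F*_r(−x) = F*_r(x) as an identity in ℚ[x]. -/
open PowerSeries Finset
open scoped Polynomial

local notation "x" => (Polynomial.X : ℚ[X])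

theorem Ring.factorial_nsmul_choose_eq_prod {A : Type*} [CommRing A] [BinomialRing A]
    (r : A) (n : ℕ) : n.factorial • Ring.choose r n = ∏ j ∈ range n, (r - j) := by
  rw [← descPochhammer_eval_eq_prod_range, ← descPochhammer_map (algebraMap ℤ A),
    Polynomial.eval_map, ← Polynomial.aeval_def, Polynomial.aeval_eq_smeval,
    Ring.descPochhammer_eq_factorial_smul_choose]

theorem PowerSeries.map_binomialSeries {A B : Type*} [CommRing A] [BinomialRing A] [CommRing B]
    [BinomialRing B] (f : A →+* B) (r : A) :
    map f (binomialSeries A r) = binomialSeries B (f r) := by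
  ext1 n
  simp [Ring.map_choose]

/-- With `d = (b - 1) / y` and `d' = (1 - b⁻¹) / y`, the inverses `y / (b - 1)` and
`y b / (b - 1)` differ by `y`. -/
theorem eq_add_of_mul_eq_sub_one {R : Type*} [CommRing R] [IsDomain R] {y b b' d d' g g' : R}
    (hy : y ≠ 0) (hb : b * b' = 1) (hd : y * d = b - 1) (hd' : -y * d' = b' - 1)
    (hg : g * d = 1) (hg' : g' * d' = 1) : g' = g + y := by
  have hdd' : d = b * d' := mul_left_cancel₀ hy (by linear_combination hd + b * hd' + hb)
  have hgg' : g' = g * b := by linear_combination (-g') * hg + g' * g * hdd' + g * b * hg'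
  linear_combination hgg' - g * hd + y * hg

theorem C_X_mul_X_mul_DstarSer : C x * X * DstarSer = binomialSeries ℚ[X] x - 1 := by
  refine PowerSeries.ext fun n => ?_
  rcases n with _ | k
  · simp
  have hchoose := Ring.factorial_nsmul_choose_eq_prod x (k + 1)
  rw [prod_range_succ', ← Nat.cast_smul_eq_nsmul ℚ] at hchoose
  rw [mul_right_comm, coeff_succ_mul_X, coeff_C_mul, map_sub, binomialSeries_coeff, coeff_one,
    if_neg k.succ_ne_zero, sub_zero, smul_eq_mul, mul_one, DstarSer, coeff_mk,
    ← inv_smul_smul₀ (Nat.cast_ne_zero.2 (k + 1).factorial_ne_zero : ((k + 1).factorial : ℚ) ≠ 0)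
      (Ring.choose _ _), hchoose, Polynomial.smul_eq_C_mul]
  simp only [Nat.cast_add, Nat.cast_one, CharP.cast_eq_zero, sub_zero, one_div, map_add,
    map_natCast, map_one]
  ring

theorem map_compRingHom_egf (F : ℕ → ℚ[X]) (q : ℚ[X]) :
    map (Polynomial.compRingHom q) (egf F) = egf fun r => (F r).comp q := by
  ext1 r
  simp [egf]

theorem egf_comp_neg_X {F : ℕ → ℚ[X]} (hF : egf F * DstarSer = 1) :
    egf (fun r => (F r).comp (-x)) = egf F + C x * X := by
  set σ := Polynomial.compRingHom (-x)
  have hy : C x * X ≠ 0 :=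
    mul_ne_zero ((map_ne_zero_iff _ C_injective).2 Polynomial.X_ne_zero) (X_ne_zero (R := ℚ[X]))
  have hb : binomialSeries ℚ[X] x * binomialSeries ℚ[X] (-x) = 1 := by
    rw [← binomialSeries_add, add_neg_cancel, binomialSeries_zero]
  have hD := C_X_mul_X_mul_DstarSer
  have hDσ : -(C x * X) * map σ DstarSer = binomialSeries ℚ[X] (-x) - 1 := by
    simpa [σ, map_binomialSeries] using congrArg (map σ) hD
  have hFσ : map σ (egf F) * map σ DstarSer = 1 := by rw [← map_mul, hF, map_one]
  rw [← map_compRingHom_egf]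
  exact eq_add_of_mul_eq_sub_one hy hb hD hDσ hF hFσ

/-- For every `r ≥ 2`, the polynomial `F*_r` is even: `F*_r(-x) = F*_r(x)` in `ℚ[x]`. -/
theorem Fstar_even (Fstar : ℕ → Polynomial ℚ) (hFstar : egf Fstar * DstarSer = 1) :
    ∀ r : ℕ, 2 ≤ r → (Fstar r).comp (-Polynomial.X) = Fstar r := by
  intro r hr
  have h := congrArg (coeff r) (egf_comp_neg_X hFstar)
  rw [map_add, coeff_C_mul, coeff_X, if_neg (by omega), mul_zero, add_zero, egf, egf, coeff_mk,
    coeff_mk] at h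
  exact mul_left_cancel₀ (by simp [Nat.factorial_ne_zero]) h
end
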